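/- An Archimedean vector lattice F has the projection property if and only if for every order bounded disjoint set G ⊆ F⁺ there exists g ∈ G^{dd} with h ≤ g for all h ∈ G. In particular, if every order bounded disjoint set in F has a supremum, then F has the projection property. -/

import Mathlib

open Pointwise

variable {F : Type*} [Lattice F] [AddCommGroup F] [Module ℝ F]
  [CovariantClass F F (· + ·) (· ≤ ·)] [PosSMulMono ℝ F]

/-- A subset of a vector lattice is solid if it is nonempty and `|f| ≤ |e|`, `e ∈ E`
imply `f ∈ E`. -/
def Solid (E : Set F) : Prop :=
  E.Nonempty ∧ ∀ f e : F, e ∈ E → |f| ≤ |e| → f ∈ E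

/-- An ideal of a vector lattice: a solid linear subspace. -/
def IsIdeal (E : Set F) : Prop :=
  (0 : F) ∈ E ∧ (∀ x y : F, x ∈ E → y ∈ E → x + y ∈ E) ∧
    (∀ (c : ℝ) (x : F), x ∈ E → c • x ∈ E) ∧ Solid E

/-- The positive part of a set: its elements lying in the positive cone. -/
def posPart (E : Set F) : Set F := E ∩ {x : F | 0 ≤ x}

/-- The disjoint complement of a set. -/
def dComp (G : Set F) : Set F := {f : F | ∀ g ∈ G, |f| ⊓ |g| = 0}

/-- The principal ideal generated by `|e|`. -/
def pIdeal (e : F) : Set F := {f : F | ∃ α : ℝ, 0 ≤ α ∧ |f| ≤ α • |e|}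

/-!
The forward direction applies the projection property to the band `G^{dd}`: the component in
`G^{dd}` of an upper bound of `G` dominates `G`. A supremum `s` of a positive set `G` lies in
`G^{dd}` because `s⁺ + v ≤ s⁺ ⊔ v` for every `v ≥ 0` disjoint from `G`.

For the converse, principal projections come first. For `f, u ≥ 0` the layers
`d m = f ⊓ (m + 1) • u - f ⊓ m • u` decrease, and the elements `w n = (n + 1) • (d n - d (n + 1))`
are disjoint as soon as their indices differ by at least two, are bounded by `f + u`, and satisfy
`∑_{n < m} w n + m • d m = f ⊓ m • u`. Dominators `a, b` of the even and of the odd `w n` lie in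
`{u}^{dd}`, and the Archimedean property shows that `f - f ⊓ (a + b)` is disjoint from `u`.
For a band `E` and `f ≥ 0` take a maximal disjoint family `G` of nonzero positive elements of `E`
and a dominator `u` of the components of `f` in the bands `{g}^{dd}`, `g ∈ G`; then
`f = f ⊓ u + (f - f ⊓ u)`, and maximality of `G` puts `f - f ⊓ u` into `E^d`.
-/

open Finset

section LatticeOrderedGroup

theorem inf_eq_zero_of_le {α : Type*} [Lattice α] [Zero α] {a b x y : α} (hx : 0 ≤ x)
    (hy : 0 ≤ y) (hxa : x ≤ a) (hyb : y ≤ b) (hab : a ⊓ b = 0) : x ⊓ y = 0 :=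
  le_antisymm (hab ▸ inf_le_inf hxa hyb) (le_inf hx hy)

theorem smul_le_abs_smul_abs {α : Type*} [Lattice α] [AddCommGroup α] [Module ℝ α]
    [PosSMulMono ℝ α] (c : ℝ) (x : α) : c • x ≤ |c| • |x| := by
  rcases le_total 0 c with hc | hc
  · rw [abs_of_nonneg hc]; exact smul_le_smul_of_nonneg_left (le_abs_self x) hc
  · rw [abs_of_nonpos hc, ← neg_smul_neg]
    exact smul_le_smul_of_nonneg_left (neg_le_abs x) (neg_nonneg.2 hc)

variable {α : Type*} [Lattice α] [AddCommGroup α] [IsOrderedAddMonoid α] {a b c x y : α}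

theorem add_eq_sup_of_inf_eq_zero (h : a ⊓ b = 0) : a + b = a ⊔ b := by
  rw [← inf_add_sup a b, h, zero_add]

theorem add_inf_le_inf_add_inf (ha : 0 ≤ a) (hb : 0 ≤ b) (hc : 0 ≤ c) :
    (a + b) ⊓ c ≤ a ⊓ c + b ⊓ c := by
  rw [inf_add a c (b ⊓ c), add_inf b c a, add_inf b c c]
  exact le_inf (le_inf inf_le_left (inf_le_right.trans (le_add_of_nonneg_left ha)))
    (le_inf (inf_le_right.trans (le_add_of_nonneg_right hb))
      (inf_le_right.trans (le_add_of_nonneg_right hc)))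

theorem add_inf_eq_zero (ha : 0 ≤ a) (hb : 0 ≤ b) (hc : 0 ≤ c) (hac : a ⊓ c = 0)
    (hbc : b ⊓ c = 0) : (a + b) ⊓ c = 0 :=
  le_antisymm ((add_inf_le_inf_add_inf ha hb hc).trans_eq (by rw [hac, hbc, add_zero]))
    (le_inf (add_nonneg ha hb) hc)

theorem nsmul_inf_le (n : ℕ) (ha : 0 ≤ a) (hc : 0 ≤ c) : (n • a) ⊓ c ≤ n • (a ⊓ c) := by
  induction n with
  | zero => simp
  | succ n ih =>
    rw [succ_nsmul, succ_nsmul]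
    exact (add_inf_le_inf_add_inf (nsmul_nonneg ha n) ha hc).trans (add_le_add_left ih _)

theorem nsmul_inf_eq_zero (n : ℕ) (ha : 0 ≤ a) (hc : 0 ≤ c) (h : a ⊓ c = 0) :
    (n • a) ⊓ c = 0 :=
  le_antisymm ((nsmul_inf_le n ha hc).trans_eq (by rw [h, nsmul_zero]))
    (le_inf (nsmul_nonneg ha n) hc)

theorem nsmul_inf_nsmul_eq_zero (m n : ℕ) (ha : 0 ≤ a) (hc : 0 ≤ c) (h : a ⊓ c = 0) :
    (m • a) ⊓ (n • c) = 0 := by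
  refine nsmul_inf_eq_zero m ha (nsmul_nonneg hc n) ?_
  rw [inf_comm] at h ⊢
  exact nsmul_inf_eq_zero n hc ha h

theorem abs_nsmul_le (n : ℕ) (x : α) : |n • x| ≤ n • |x| :=
  abs_le'.2 ⟨nsmul_le_nsmul_right (le_abs_self x) n,
    by rw [← smul_neg]; exact nsmul_le_nsmul_right (neg_le_abs x) n⟩

theorem abs_posPart_le (x : α) : |x⁺| ≤ |x| := by
  rw [abs_of_nonneg (posPart_nonneg x), posPart_def]
  exact sup_le (le_abs_self x) (abs_nonneg x)

theorem nsmul_posPart_sub_inf_le (hx : 0 ≤ x) (n : ℕ) :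
    (n • (x - y)⁺) ⊓ y ≤ x := by
  have hy_le : y ≤ x + (x - y)⁻ := by
    rw [← sub_le_iff_le_add', ← neg_sub]
    exact neg_le_negPart _
  have hdisj : (x - y)⁻ ⊓ n • (x - y)⁺ = 0 := by
    rw [inf_comm]
    exact nsmul_inf_eq_zero n (posPart_nonneg _) (negPart_nonneg _)
      (posPart_inf_negPart_eq_zero _)
  calc (n • (x - y)⁺) ⊓ y ≤ (x + (x - y)⁻) ⊓ n • (x - y)⁺ := by
        rw [inf_comm]; exact inf_le_inf_right _ hy_le
    _ ≤ x ⊓ n • (x - y)⁺ + (x - y)⁻ ⊓ n • (x - y)⁺ :=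
        add_inf_le_inf_add_inf hx (negPart_nonneg _) (nsmul_nonneg (posPart_nonneg _) n)
    _ ≤ x := by rw [hdisj, add_zero]; exact inf_le_left

theorem inf_add_add_add_inf_le (hc : 0 ≤ c) :
    x ⊓ (a + c + c) + x ⊓ a ≤ x ⊓ (a + c) + x ⊓ (a + c) := by
  have hxa : x ⊓ (a + c + c) + x ⊓ a ≤ x + a := add_le_add inf_le_left inf_le_right
  rw [inf_add x (a + c), add_inf x (a + c) x, add_inf x (a + c) (a + c)]
  refine le_inf (le_inf (add_le_add inf_le_left inf_le_left) ?_) (le_inf ?_ ?_)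
  · exact hxa.trans (add_le_add_right (le_add_of_nonneg_right hc) x)
  · exact hxa.trans_eq (add_comm x a) |>.trans (add_le_add_left (le_add_of_nonneg_right hc) x)
  · exact (add_le_add inf_le_right inf_le_right).trans_eq (by abel)

theorem Finset.sum_inf_eq_zero {ι : Type*} {s : Finset ι} {x : ι → α} (hx : ∀ i ∈ s, 0 ≤ x i)
    (hc : 0 ≤ c) (h : ∀ i ∈ s, x i ⊓ c = 0) : (∑ i ∈ s, x i) ⊓ c = 0 :=
  (Finset.sum_induction x (fun y => 0 ≤ y ∧ y ⊓ c = 0)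
    (fun _ _ h₁ h₂ => ⟨add_nonneg h₁.1 h₂.1, add_inf_eq_zero h₁.1 h₂.1 hc h₁.2 h₂.2⟩)
    ⟨le_rfl, inf_eq_left.2 hc⟩ fun i hi => ⟨hx i hi, h i hi⟩).2

theorem Finset.sum_le_of_pairwise_inf_eq_zero {ι : Type*} {s : Finset ι} {x : ι → α}
    (hx : ∀ i ∈ s, 0 ≤ x i) (hd : (s : Set ι).Pairwise fun i j => x i ⊓ x j = 0) (ha : 0 ≤ a)
    (hxa : ∀ i ∈ s, x i ≤ a) : ∑ i ∈ s, x i ≤ a := by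
  classical
  induction s using Finset.induction_on with
  | empty => simp [ha]
  | insert i s hi ih =>
    simp only [Finset.mem_insert, forall_eq_or_imp] at hx hxa
    rw [Finset.coe_insert, Set.pairwise_insert] at hd
    rw [Finset.sum_insert hi, add_eq_sup_of_inf_eq_zero]
    · exact sup_le hxa.1 (ih hx.2 hd.1 hxa.2)
    · rw [inf_comm]
      exact Finset.sum_inf_eq_zero hx.2 hx.1 fun j hj =>
        (hd.2 j hj (ne_of_mem_of_not_mem hj hi).symm).2

theorem IsLUB.posPart_inf_eq_zero {G : Set α} {s v : α} (hs : IsLUB G s) (hv : 0 ≤ v)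
    (h : ∀ g ∈ G, g ⊓ v = 0) : s⁺ ⊓ v = 0 := by
  have hs_le : s ≤ s⁺ ⊔ v - v := hs.2 fun g hg => le_sub_iff_add_le.2 <| by
    rw [add_eq_sup_of_inf_eq_zero (h g hg)]
    exact sup_le_sup_right ((hs.1 hg).trans (le_posPart s)) v
  have hadd : s⁺ + v ≤ s⁺ ⊔ v :=
    le_sub_iff_add_le.1 (sup_le hs_le (sub_nonneg.2 le_sup_right))
  refine le_antisymm ?_ (le_inf (posPart_nonneg s) hv)
  rw [← add_le_add_iff_right (s⁺ ⊔ v), inf_add_sup, zero_add]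
  exact hadd

end LatticeOrderedGroup

section Layers

variable {α : Type*} [Lattice α] [AddCommGroup α] {f u v a b : α}

def layer (f u : α) (m : ℕ) : α := f ⊓ ((m + 1) • u) - f ⊓ (m • u)

def layerGap (f u : α) (n : ℕ) : α := layer f u n - layer f u (n + 1)

def weightedGap (f u : α) (n : ℕ) : α := (n + 1) • layerGap f u n

theorem sum_range_layer (hf : 0 ≤ f) (m : ℕ) : ∑ n ∈ range m, layer f u n = f ⊓ (m • u) := by
  simp only [layer]
  rw [Finset.sum_range_sub (fun m => f ⊓ (m • u)) m, zero_nsmul, inf_eq_right.2 hf, sub_zero]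

theorem sum_weightedGap_add_nsmul_layer (hf : 0 ≤ f) (m : ℕ) :
    ∑ n ∈ range m, weightedGap f u n + m • layer f u m = f ⊓ (m • u) := by
  induction m with
  | zero => simp [inf_eq_right.2 hf]
  | succ m ih =>
    rw [sum_range_succ, add_assoc, weightedGap, layerGap, ← nsmul_add, sub_add_cancel, succ_nsmul,
      ← add_assoc, ih, layer, add_sub_cancel]

variable [IsOrderedAddMonoid α]

theorem sub_inf_eq_posPart_sub (x y : α) : x - x ⊓ y = (x - y)⁺ := by
  rw [inf_eq_sub_posPart_sub, sub_sub_cancel]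

theorem layer_nonneg (hu : 0 ≤ u) (m : ℕ) : 0 ≤ layer f u m :=
  sub_nonneg.2 (inf_le_inf_left f (nsmul_le_nsmul_left hu m.le_succ))

theorem layer_le (hu : 0 ≤ u) (m : ℕ) : layer f u m ≤ u := by
  rw [layer, sub_le_iff_le_add', inf_add, succ_nsmul]
  exact inf_le_inf_right _ (le_add_of_nonneg_right hu)

theorem layer_le_posPart (m : ℕ) : layer f u m ≤ (f - m • u)⁺ := by
  rw [← sub_inf_eq_posPart_sub]
  exact sub_le_sub_right inf_le_left _

theorem posPart_inf_le_layer (m : ℕ) : (f - m • u)⁺ ⊓ u ≤ layer f u m := by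
  rw [layer, le_sub_iff_add_le, ← sub_inf_eq_posPart_sub, inf_add, sub_add_cancel, succ_nsmul,
    add_comm _ u]
  exact inf_le_inf_left f (add_le_add_right inf_le_right u)

theorem layer_succ_le (hu : 0 ≤ u) (m : ℕ) : layer f u (m + 1) ≤ layer f u m := by
  rw [layer, layer, sub_le_sub_iff, succ_nsmul, succ_nsmul]
  exact inf_add_add_add_inf_le hu

theorem layer_antitone (hu : 0 ≤ u) : Antitone (layer f u) :=
  antitone_nat_of_succ_le (layer_succ_le hu)

theorem nsmul_layer_le (hf : 0 ≤ f) (hu : 0 ≤ u) (m : ℕ) : m • layer f u m ≤ f :=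
  calc m • layer f u m = ∑ _n ∈ range m, layer f u m := by rw [sum_const, card_range]
    _ ≤ ∑ n ∈ range m, layer f u n :=
        sum_le_sum fun n hn => layer_antitone hu (mem_range.1 hn).le
    _ ≤ f := (sum_range_layer hf m).trans_le inf_le_left

theorem layerGap_nonneg (hu : 0 ≤ u) (n : ℕ) : 0 ≤ layerGap f u n :=
  sub_nonneg.2 (layer_succ_le hu n)

theorem layerGap_le_layer (hu : 0 ≤ u) (n : ℕ) : layerGap f u n ≤ layer f u n :=
  sub_le_self _ (layer_nonneg hu (n + 1))

theorem layerGap_le_posPart (hu : 0 ≤ u) (n : ℕ) :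
    layerGap f u n ≤ ((n + 2) • u - f)⁺ := by
  have hlow : f ⊓ ((n + 2) • u) - (n + 1) • u ≤ layer f u (n + 1) :=
    sub_le_sub_left inf_le_right _
  calc layerGap f u n ≤ u - layer f u (n + 1) := sub_le_sub_right (layer_le hu n) _
    _ ≤ u - (f ⊓ ((n + 2) • u) - (n + 1) • u) := sub_le_sub_left hlow u
    _ = (n + 2) • u - f ⊓ ((n + 2) • u) := by rw [succ_nsmul _ (n + 1)]; abel
    _ = ((n + 2) • u - f)⁺ := by rw [inf_comm, sub_inf_eq_posPart_sub]

theorem layerGap_inf_layer_eq_zero (hu : 0 ≤ u) {n m : ℕ} (h : n + 2 ≤ m) :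
    layerGap f u n ⊓ layer f u m = 0 := by
  refine inf_eq_zero_of_le (a := (m • u - f)⁺) (layerGap_nonneg hu n) (layer_nonneg hu m)
    ((layerGap_le_posPart hu n).trans ?_) (layer_le_posPart m) ?_
  · exact posPart_mono (sub_le_sub_right (nsmul_le_nsmul_left hu h) f)
  · rw [← neg_sub f (m • u), posPart_neg, inf_comm]
    exact posPart_inf_negPart_eq_zero _

theorem weightedGap_nonneg (hu : 0 ≤ u) (n : ℕ) : 0 ≤ weightedGap f u n :=
  nsmul_nonneg (layerGap_nonneg hu n) _

theorem weightedGap_le_nsmul (hu : 0 ≤ u) (n : ℕ) : weightedGap f u n ≤ (n + 1) • u :=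
  nsmul_le_nsmul_right ((layerGap_le_layer hu n).trans (layer_le hu n)) _

theorem weightedGap_le_add (hf : 0 ≤ f) (hu : 0 ≤ u) (n : ℕ) : weightedGap f u n ≤ f + u := by
  rw [weightedGap, succ_nsmul]
  exact add_le_add ((nsmul_le_nsmul_right (layerGap_le_layer hu n) n).trans
    (nsmul_layer_le hf hu n)) ((layerGap_le_layer hu n).trans (layer_le hu n))

theorem weightedGap_inf_eq_zero (hu : 0 ≤ u) {n m : ℕ} (hnm : n ≠ m) (hpar : Even n ↔ Even m) :
    weightedGap f u n ⊓ weightedGap f u m = 0 := by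
  have hgap : n + 2 ≤ m ∨ m + 2 ≤ n := by
    rw [Nat.even_iff, Nat.even_iff] at hpar; omega
  have hgap_inf : ∀ {i j : ℕ}, i + 2 ≤ j → layerGap f u i ⊓ layerGap f u j = 0 := fun h =>
    inf_eq_zero_of_le (layerGap_nonneg hu _) (layerGap_nonneg hu _) le_rfl
      (layerGap_le_layer hu _) (layerGap_inf_layer_eq_zero hu h)
  rcases hgap with h | h
  · exact nsmul_inf_nsmul_eq_zero _ _ (layerGap_nonneg hu n) (layerGap_nonneg hu m) (hgap_inf h)
  · rw [inf_comm]
    exact nsmul_inf_nsmul_eq_zero _ _ (layerGap_nonneg hu m) (layerGap_nonneg hu n) (hgap_inf h)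

theorem sum_weightedGap_le (hu : 0 ≤ u) (ha : 0 ≤ a) (hb : 0 ≤ b)
    (hwa : ∀ n ∈ {n | Even n}, weightedGap f u n ≤ a)
    (hwb : ∀ n ∈ {n | ¬Even n}, weightedGap f u n ≤ b) (m : ℕ) :
    ∑ n ∈ range m, weightedGap f u n ≤ a + b := by
  rw [← sum_filter_add_sum_filter_not _ Even]
  refine add_le_add (Finset.sum_le_of_pairwise_inf_eq_zero (fun n _ => weightedGap_nonneg hu n)
    ?_ ha fun n hn => hwa n (mem_filter.1 hn).2) (Finset.sum_le_of_pairwise_inf_eq_zero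
      (fun n _ => weightedGap_nonneg hu n) ?_ hb fun n hn => hwb n (mem_filter.1 hn).2)
  · intro i hi j hj hij
    exact weightedGap_inf_eq_zero hu hij (iff_of_true (mem_filter.1 hi).2 (mem_filter.1 hj).2)
  · intro i hi j hj hij
    exact weightedGap_inf_eq_zero hu hij (iff_of_false (mem_filter.1 hi).2 (mem_filter.1 hj).2)

theorem sub_inf_inf_le_succ_nsmul_layer (hf : 0 ≤ f) (hu : 0 ≤ u)
    (hv : ∀ m, ∑ n ∈ range m, weightedGap f u n ≤ v) (m : ℕ) :
    (f - f ⊓ v) ⊓ u ≤ (m + 1) • layer f u m := by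
  have hR : 0 ≤ m • layer f u m := nsmul_nonneg (layer_nonneg hu m) m
  have hfv : f - f ⊓ v ≤ (f - m • u)⁺ + m • layer f u m := by
    rw [sub_inf_eq_posPart_sub, posPart_def]
    refine sup_le ?_ (add_nonneg (posPart_nonneg _) hR)
    calc f - v ≤ f - ∑ n ∈ range m, weightedGap f u n := sub_le_sub_left (hv m) f
      _ = f - f ⊓ (m • u) + m • layer f u m := by
          rw [← sum_weightedGap_add_nsmul_layer hf m]; abel
      _ = (f - m • u)⁺ + m • layer f u m := by rw [sub_inf_eq_posPart_sub]
  calc (f - f ⊓ v) ⊓ u ≤ ((f - m • u)⁺ + m • layer f u m) ⊓ u := inf_le_inf_right u hfv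
    _ ≤ (f - m • u)⁺ ⊓ u + (m • layer f u m) ⊓ u :=
        add_inf_le_inf_add_inf (posPart_nonneg _) hR hu
    _ ≤ layer f u m + m • layer f u m := add_le_add (posPart_inf_le_layer m) inf_le_left
    _ = (m + 1) • layer f u m := by rw [succ_nsmul, add_comm]

theorem nsmul_sub_inf_inf_le (hf : 0 ≤ f) (hu : 0 ≤ u)
    (hv : ∀ m, ∑ n ∈ range m, weightedGap f u n ≤ v) (n : ℕ) :
    n • ((f - f ⊓ v) ⊓ u) ≤ f := by
  have hlayer : n • ((f - f ⊓ v) ⊓ u) ≤ (n * (n + 1)) • (f - n • u)⁺ := by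
    rw [mul_nsmul']
    exact nsmul_le_nsmul_right ((sub_inf_inf_le_succ_nsmul_layer hf hu hv n).trans
      (nsmul_le_nsmul_right (layer_le_posPart n) _)) n
  exact (le_inf hlayer (nsmul_le_nsmul_right inf_le_right n)).trans
    (nsmul_posPart_sub_inf_le hf _)

end Layers

section DisjointComplement

variable {α : Type*} [Lattice α] [AddCommGroup α] {S T : Set α} {x y z : α}

theorem dComp_anti (h : S ⊆ T) : dComp T ⊆ dComp S :=
  fun _ hx g hg => hx g (h hg)

theorem subset_dComp_dComp (S : Set α) : S ⊆ dComp (dComp S) :=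
  fun x hx g hg => by rw [inf_comm]; exact hg x hx

theorem dComp_dComp_dComp (S : Set α) : dComp (dComp (dComp S)) = dComp S :=
  (dComp_anti (subset_dComp_dComp S)).antisymm (subset_dComp_dComp (dComp S))

theorem dComp_dComp_subset (h : S ⊆ dComp (dComp T)) : dComp (dComp S) ⊆ dComp (dComp T) := by
  simpa only [dComp_dComp_dComp] using dComp_anti (dComp_anti h)

theorem abs_inf_abs_eq_zero_of_subset_dComp (hx : x ∈ dComp (dComp S)) (hy : y ∈ dComp (dComp T))
    (hTS : T ⊆ dComp S) : |x| ⊓ |y| = 0 := by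
  have hyS := dComp_dComp_subset (T := dComp S) (by rwa [dComp_dComp_dComp]) hy
  rw [dComp_dComp_dComp] at hyS
  exact hx y hyS

variable [IsOrderedAddMonoid α]

theorem zero_mem_dComp : (0 : α) ∈ dComp S :=
  fun g _ => by rw [abs_zero]; exact inf_eq_left.2 (abs_nonneg g)

theorem mem_dComp_of_abs_le (hy : y ∈ dComp S) (h : |x| ≤ |y|) : x ∈ dComp S :=
  fun g hg => inf_eq_zero_of_le (abs_nonneg x) (abs_nonneg g) h le_rfl (hy g hg)

theorem add_mem_dComp (hx : x ∈ dComp S) (hy : y ∈ dComp S) : x + y ∈ dComp S :=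
  fun g hg => inf_eq_zero_of_le (abs_nonneg _) (abs_nonneg g) (abs_add_le x y) le_rfl
    (add_inf_eq_zero (abs_nonneg x) (abs_nonneg y) (abs_nonneg g) (hx g hg) (hy g hg))

theorem sub_mem_dComp (hx : x ∈ dComp S) (hy : y ∈ dComp S) : x - y ∈ dComp S :=
  sub_eq_add_neg x y ▸ add_mem_dComp hx (mem_dComp_of_abs_le hy (abs_neg y).le)

theorem nsmul_mem_dComp (n : ℕ) (hx : x ∈ dComp S) : n • x ∈ dComp S :=
  fun g hg => inf_eq_zero_of_le (abs_nonneg _) (abs_nonneg g) (abs_nsmul_le n x) le_rfl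
    (nsmul_inf_eq_zero n (abs_nonneg x) (abs_nonneg g) (hx g hg))

theorem posPart_mem_dComp (hx : x ∈ dComp S) : x⁺ ∈ dComp S :=
  mem_dComp_of_abs_le hx (abs_posPart_le x)

theorem mem_dComp_dComp_singleton_of_le_nsmul {u : α} (hx : 0 ≤ x) (hu : 0 ≤ u) {n : ℕ}
    (h : x ≤ n • u) : x ∈ dComp (dComp {u}) := by
  refine mem_dComp_of_abs_le (nsmul_mem_dComp n (subset_dComp_dComp {u} rfl)) ?_
  rwa [abs_of_nonneg hx, abs_of_nonneg (nsmul_nonneg hu n)]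

theorem le_zero_of_le_of_mem_dComp (hz : z ∈ dComp S) (hy : y ∈ dComp (dComp S)) (h : z ≤ y) :
    z ≤ 0 := by
  have hzy : z⁺ ≤ |y| := by
    rw [posPart_def]; exact sup_le (h.trans (le_abs_self y)) (abs_nonneg y)
  have hdisj := hy z⁺ (posPart_mem_dComp hz)
  rw [abs_of_nonneg (posPart_nonneg z), inf_eq_right.2 hzy] at hdisj
  exact posPart_eq_zero.1 hdisj

theorem abs_smul_le_nsmul [Module ℝ α] [PosSMulMono ℝ α] {c : ℝ} {n : ℕ} (hcn : |c| ≤ n)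
    (x : α) : |c • x| ≤ n • |x| := by
  have hc : |c| • |x| ≤ n • |x| := by
    rw [← Nat.cast_smul_eq_nsmul ℝ, ← sub_nonneg, ← sub_smul]
    exact smul_nonneg (sub_nonneg.2 hcn) (abs_nonneg x)
  refine abs_le'.2 ⟨(smul_le_abs_smul_abs c x).trans hc, ?_⟩
  rw [← smul_neg]
  exact (smul_le_abs_smul_abs c (-x)).trans (abs_neg x ▸ hc)

theorem smul_mem_dComp [Module ℝ α] [PosSMulMono ℝ α] (c : ℝ) (hx : x ∈ dComp S) :
    c • x ∈ dComp S := by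
  obtain ⟨n, hn⟩ := exists_nat_ge |c|
  refine mem_dComp_of_abs_le (nsmul_mem_dComp n (mem_dComp_of_abs_le hx (abs_abs x).le)) ?_
  rw [abs_of_nonneg (nsmul_nonneg (abs_nonneg x) n)]
  exact abs_smul_le_nsmul hn x

theorem isIdeal_dComp [Module ℝ α] [PosSMulMono ℝ α] (S : Set α) : IsIdeal (dComp S) :=
  ⟨zero_mem_dComp, fun _ _ => add_mem_dComp, fun c _ => smul_mem_dComp c, ⟨0, zero_mem_dComp⟩,
    fun _ _ he h => mem_dComp_of_abs_le he h⟩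

end DisjointComplement

theorem Set.exists_maximal_pairwise {ι : Type*} (r : ι → ι → Prop) (T : Set ι) :
    ∃ G ⊆ T, G.Pairwise r ∧ ∀ x ∈ T, (∀ g ∈ G, r x g ∧ r g x) → x ∈ G := by
  obtain ⟨G, hG⟩ := zorn_subset {G | G ⊆ T ∧ G.Pairwise r} fun c hc hchain =>
    ⟨⋃₀ c, ⟨Set.sUnion_subset fun s hs => (hc hs).1,
      hchain.pairwise_sUnion.2 fun s hs => (hc hs).2⟩, fun s hs => Set.subset_sUnion_of_mem hs⟩
  refine ⟨G, hG.1.1, hG.1.2, fun x hx hxG => ?_⟩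
  exact hG.2 ⟨Set.insert_subset hx hG.1.1, hG.1.2.insert fun g hg _ => hxG g hg⟩
    (Set.subset_insert x G) (Set.mem_insert x G)

section Domination

variable (α : Type*) [Lattice α] [AddCommGroup α]

def HasProjectionProperty [Module ℝ α] : Prop :=
  ∀ E : Set α, IsIdeal E → E = dComp (dComp E) → E + dComp E = Set.univ

def HasDisjointDominators : Prop :=
  ∀ G : Set α, G ⊆ {x : α | 0 ≤ x} → (∃ f : α, ∀ g ∈ G, g ≤ f) →
    (∀ g ∈ G, ∀ h ∈ G, g ≠ h → g ⊓ h = 0) → ∃ g ∈ dComp (dComp G), ∀ h ∈ G, h ≤ g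

def HasDisjointSuprema : Prop :=
  ∀ G : Set α, G ⊆ {x : α | 0 ≤ x} → (∃ f : α, ∀ g ∈ G, g ≤ f) →
    (∀ g ∈ G, ∀ h ∈ G, g ≠ h → g ⊓ h = 0) → ∃ s : α, IsLUB G s

variable {α} [IsOrderedAddMonoid α]

theorem HasProjectionProperty.hasDisjointDominators [Module ℝ α] [PosSMulMono ℝ α]
    (h : HasProjectionProperty α) : HasDisjointDominators α := by
  rintro G - ⟨b, hb⟩ -
  have hdec := h _ (isIdeal_dComp _) (dComp_dComp_dComp (dComp G)).symm
  obtain ⟨x, hx, y, hy, rfl⟩ := Set.mem_add.1 (hdec ▸ Set.mem_univ b)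
  refine ⟨x, hx, fun g hg => sub_nonpos.1 (le_zero_of_le_of_mem_dComp
    (sub_mem_dComp (subset_dComp_dComp G hg) hx) hy (sub_le_iff_le_add'.2 (hb g hg)))⟩

theorem HasDisjointSuprema.hasDisjointDominators (h : HasDisjointSuprema α) :
    HasDisjointDominators α := by
  intro G hG0 hbdd hd
  obtain ⟨s, hs⟩ := h G hG0 hbdd hd
  refine ⟨s⁺, fun c hc => ?_, fun g hg => (hs.1 hg).trans (le_posPart s)⟩
  rw [abs_of_nonneg (posPart_nonneg s)]
  refine hs.posPart_inf_eq_zero (abs_nonneg c) fun g hg => ?_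
  rw [← abs_of_nonneg (hG0 hg), inf_comm]
  exact hc g hg

theorem HasDisjointDominators.exists_image (h : HasDisjointDominators α) {ι : Type*}
    {x : ι → α} {s : Set ι} {b : α} (hx0 : ∀ i ∈ s, 0 ≤ x i) (hxb : ∀ i ∈ s, x i ≤ b)
    (hd : s.Pairwise fun i j => x i ⊓ x j = 0) :
    ∃ a ∈ dComp (dComp (x '' s)), 0 ≤ a ∧ ∀ i ∈ s, x i ≤ a := by
  obtain ⟨a, ha, hxa⟩ := h (x '' s) (by rintro _ ⟨i, hi, rfl⟩; exact hx0 i hi)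
    ⟨b, by rintro _ ⟨i, hi, rfl⟩; exact hxb i hi⟩
    (by rintro _ ⟨i, hi, rfl⟩ _ ⟨j, hj, rfl⟩ hij; exact hd hi hj (ne_of_apply_ne x hij))
  exact ⟨a⁺, posPart_mem_dComp ha, posPart_nonneg a,
    fun i hi => (hxa _ ⟨i, hi, rfl⟩).trans (le_posPart a)⟩

theorem HasDisjointDominators.exists_component (h : HasDisjointDominators α)
    (hArch : ∀ f g : α, 0 ≤ f → (∀ n : ℕ, n • g ≤ f) → g ≤ 0) {f u : α} (hf : 0 ≤ f)
    (hu : 0 ≤ u) :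
    ∃ f₁ ∈ dComp (dComp {u}), 0 ≤ f₁ ∧ f₁ ≤ f ∧ (f - f₁) ⊓ u = 0 := by
  have hband : ∀ s : Set ℕ, dComp (dComp (weightedGap f u '' s)) ⊆ dComp (dComp {u}) :=
    fun s => dComp_dComp_subset (by
      rintro _ ⟨n, -, rfl⟩
      exact mem_dComp_dComp_singleton_of_le_nsmul (weightedGap_nonneg hu n) hu
        (weightedGap_le_nsmul hu n))
  obtain ⟨a, ha, ha0, hwa⟩ := h.exists_image (s := {n | Even n})
    (fun n _ => weightedGap_nonneg hu n) (fun n _ => weightedGap_le_add hf hu n)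
    fun i hi j hj hij => weightedGap_inf_eq_zero hu hij (iff_of_true hi hj)
  obtain ⟨b, hb, hb0, hwb⟩ := h.exists_image (s := {n | ¬Even n})
    (fun n _ => weightedGap_nonneg hu n) (fun n _ => weightedGap_le_add hf hu n)
    fun i hi j hj hij => weightedGap_inf_eq_zero hu hij (iff_of_false hi hj)
  have hv := sum_weightedGap_le hu ha0 hb0 hwa hwb
  have hf₁ : 0 ≤ f ⊓ (a + b) := le_inf hf (add_nonneg ha0 hb0)
  refine ⟨f ⊓ (a + b), mem_dComp_of_abs_le (add_mem_dComp (hband _ ha) (hband _ hb)) ?_, hf₁,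
    inf_le_left, ?_⟩
  · rw [abs_of_nonneg hf₁, abs_of_nonneg (add_nonneg ha0 hb0)]
    exact inf_le_right
  · exact le_antisymm (hArch f _ hf (nsmul_sub_inf_inf_le hf hu hv))
      (le_inf (sub_nonneg.2 inf_le_left) hu)


theorem HasDisjointDominators.exists_sub_inf_inf_eq_zero (h : HasDisjointDominators α)
    (hArch : ∀ f g : α, 0 ≤ f → (∀ n : ℕ, n • g ≤ f) → g ≤ 0) {G : Set α}
    (hG0 : ∀ g ∈ G, 0 ≤ g) (hGd : G.Pairwise fun g h => g ⊓ h = 0) {f : α} (hf : 0 ≤ f) :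
    ∃ u ∈ dComp (dComp G), 0 ≤ u ∧ ∀ g ∈ G, (f - f ⊓ u) ⊓ g = 0 := by
  choose! P hPband hP0 hPf hPdisj using
    fun g (hg : g ∈ G) => h.exists_component hArch hf (hG0 g hg)
  obtain ⟨u, hu, hu0, hPu⟩ := h.exists_image hP0 hPf fun g hg g' hg' hgg' => by
    have := abs_inf_abs_eq_zero_of_subset_dComp (hPband g hg) (hPband g' hg')
      (Set.singleton_subset_iff.2 fun _ hx => by
        rw [hx, abs_of_nonneg (hG0 g hg), abs_of_nonneg (hG0 g' hg'), inf_comm]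
        exact hGd hg hg' hgg')
    rwa [abs_of_nonneg (hP0 g hg), abs_of_nonneg (hP0 g' hg')] at this
  have huG : u ∈ dComp (dComp G) := dComp_dComp_subset (by
    rintro _ ⟨g, hg, rfl⟩
    exact dComp_dComp_subset (Set.singleton_subset_iff.2 (subset_dComp_dComp G hg))
      (hPband g hg)) hu
  exact ⟨u, huG, hu0, fun g hg => inf_eq_zero_of_le (sub_nonneg.2 inf_le_left) (hG0 g hg)
    (sub_le_sub_left (le_inf (hPf g hg) (hPu g hg)) f) le_rfl (hPdisj g hg)⟩

theorem HasDisjointDominators.mem_dComp_dComp_add_dComp_of_nonneg (h : HasDisjointDominators α)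
    (hArch : ∀ f g : α, 0 ≤ f → (∀ n : ℕ, n • g ≤ f) → g ≤ 0) (S : Set α) {f : α}
    (hf : 0 ≤ f) : f ∈ dComp (dComp S) + dComp S := by
  obtain ⟨G, hGS, hGd, hGmax⟩ :=
    Set.exists_maximal_pairwise (fun g h : α => g ⊓ h = 0) {w | w ∈ dComp (dComp S) ∧ 0 < w}
  have hG0 : ∀ g ∈ G, 0 ≤ g := fun g hg => (hGS hg).2.le
  obtain ⟨u, hu, hu0, hfu⟩ := h.exists_sub_inf_inf_eq_zero hArch hG0 hGd hf
  have huS : u ∈ dComp (dComp S) := dComp_dComp_subset (fun g hg => (hGS hg).1) hu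
  refine Set.mem_add.2 ⟨f ⊓ u, mem_dComp_of_abs_le huS ?_, f - f ⊓ u, fun c hc => ?_,
    add_sub_cancel _ _⟩
  · rw [abs_of_nonneg (le_inf hf hu0), abs_of_nonneg hu0]
    exact inf_le_right
  have hd0 : 0 ≤ (f - f ⊓ u) ⊓ |c| := le_inf (sub_nonneg.2 inf_le_left) (abs_nonneg c)
  have hdS : (f - f ⊓ u) ⊓ |c| ∈ dComp (dComp S) := mem_dComp_of_abs_le
    (subset_dComp_dComp S hc) (by rw [abs_of_nonneg hd0]; exact inf_le_right)
  have hdG : ∀ g ∈ G, (f - f ⊓ u) ⊓ |c| ⊓ g = 0 := fun g hg =>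
    inf_eq_zero_of_le hd0 (hG0 g hg) inf_le_left le_rfl (hfu g hg)
  rw [abs_of_nonneg (sub_nonneg.2 inf_le_left)]
  by_contra hne
  have hdG' := hdG _ (hGmax _ ⟨hdS, lt_of_le_of_ne hd0 (Ne.symm hne)⟩ fun g hg =>
    ⟨hdG g hg, by rw [inf_comm]; exact hdG g hg⟩)
  exact hne (by rwa [inf_idem] at hdG')

theorem HasDisjointDominators.dComp_dComp_add_dComp (h : HasDisjointDominators α)
    (hArch : ∀ f g : α, 0 ≤ f → (∀ n : ℕ, n • g ≤ f) → g ≤ 0) (S : Set α) :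
    dComp (dComp S) + dComp S = Set.univ := by
  refine Set.eq_univ_of_forall fun f => ?_
  obtain ⟨x₁, hx₁, y₁, hy₁, h₁⟩ :=
    Set.mem_add.1 (h.mem_dComp_dComp_add_dComp_of_nonneg hArch S (posPart_nonneg f))
  obtain ⟨x₂, hx₂, y₂, hy₂, h₂⟩ :=
    Set.mem_add.1 (h.mem_dComp_dComp_add_dComp_of_nonneg hArch S (negPart_nonneg f))
  refine Set.mem_add.2 ⟨x₁ - x₂, sub_mem_dComp hx₁ hx₂, y₁ - y₂, sub_mem_dComp hy₁ hy₂, ?_⟩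
  rw [← posPart_sub_negPart f, ← h₁, ← h₂]
  abel

theorem HasDisjointDominators.hasProjectionProperty [Module ℝ α] (h : HasDisjointDominators α)
    (hArch : ∀ f g : α, 0 ≤ f → (∀ n : ℕ, n • g ≤ f) → g ≤ 0) : HasProjectionProperty α :=
  fun E _ hE => by
    calc E + dComp E = dComp (dComp E) + dComp E := by rw [← hE]
      _ = Set.univ := h.dComp_dComp_add_dComp hArch E

end Domination

/-- An Archimedean vector lattice has the projection property iff for every order
bounded disjoint set `G ⊆ F⁺` there is `g ∈ G^{dd}` dominating `G`; in particular,
disjoint completeness implies the projection property. -/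
theorem stmt14 (hArch : ∀ f g : F, 0 ≤ f → (∀ n : ℕ, n • g ≤ f) → g ≤ 0) :
    ((∀ E : Set F, IsIdeal E → E = dComp (dComp E) → E + dComp E = Set.univ) ↔
      (∀ G : Set F, G ⊆ {x : F | 0 ≤ x} → (∃ f : F, ∀ g ∈ G, g ≤ f) →
        (∀ g ∈ G, ∀ h ∈ G, g ≠ h → g ⊓ h = 0) →
        ∃ g ∈ dComp (dComp G), ∀ h ∈ G, h ≤ g)) ∧
    ((∀ G : Set F, G ⊆ {x : F | 0 ≤ x} → (∃ f : F, ∀ g ∈ G, g ≤ f) →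
        (∀ g ∈ G, ∀ h ∈ G, g ≠ h → g ⊓ h = 0) → ∃ s : F, IsLUB G s) →
      ∀ E : Set F, IsIdeal E → E = dComp (dComp E) → E + dComp E = Set.univ) := by
  have : IsOrderedAddMonoid F := { add_le_add_left := fun _ _ h c => add_le_add_left h c }
  exact ⟨⟨HasProjectionProperty.hasDisjointDominators,
    fun h => HasDisjointDominators.hasProjectionProperty h hArch⟩,
    fun h => (HasDisjointSuprema.hasDisjointDominators h).hasProjectionProperty hArch⟩
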